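/- Fix j ∈ ℕ, Δ > ε > 0, β = 1 − ν²/σ̄² < 1. For t ∈ [jΔ + ε, (j+1)Δ), the process Z_t = Z_{jΔ} + (μ − σ̄²/2)(t − jΔ) + ((t − jΔ)/ε)^{β/2}[σ̄(W_{jΔ+ε} − W_{jΔ}) + ν∫_{jΔ+ε}^t ((u − jΔ)/ε)^{−β/2} dW_u] satisfies the SDE dZ_t = [(μ − σ̄²/2) + (β/(2(t − jΔ)))(Z_t − Z_{jΔ} − (μ − σ̄²/2)(t − jΔ))] dt + ν dW_t. -/

import Mathlib

/-!
Put `c = jΔ`, `m = μ - σ̄²/2` and `f(t) = ((t - c)/ε)^{β/2}`, which solves `f' = p f` with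
`p(t) = β / (2(t - c))`. Then `X = Z - Z_c - m(t - c)` is the variation-of-constants solution
`X = f (σ̄(W_{c+ε} - W_c) + ν ∫ f⁻¹ dW)` of the linear equation `dX = p X dt + ν dW`. With the
Wiener integral of the deterministic integrand `f⁻¹` defined pathwise by integration by parts, this
is the product rule and the fundamental theorem of calculus along each continuous path.
-/

open Real MeasureTheory intervalIntegral
open Set

/-- The Wiener integral `∫_a^s g dw` of a `C¹` integrand, defined through integration by parts
so that it makes sense for every continuous path `w`. -/
noncomputable def pathwiseIntegral (g w : ℝ → ℝ) (a s : ℝ) : ℝ :=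
  g s * w s - g a * w a - ∫ u in a..s, deriv g u * w u

section VariationOfConstants

variable {f g p w : ℝ → ℝ} {a t : ℝ}

theorem continuousOn_deriv_mul_of_hasDerivAt (hg : ∀ u ∈ Icc a t, HasDerivAt g (-(p u * g u)) u)
    (hp : ContinuousOn p (Icc a t)) (hw : ContinuousOn w (Icc a t)) :
    ContinuousOn (fun u => deriv g u * w u) (Icc a t) := by
  have hgc : ContinuousOn g (Icc a t) := fun u hu => (hg u hu).continuousAt.continuousWithinAt
  exact ((hp.mul hgc).neg.mul hw).congr fun u hu => by rw [(hg u hu).deriv]; rfl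

theorem continuousOn_primitive_Icc {φ : ℝ → ℝ} (hat : a ≤ t) (hφ : ContinuousOn φ (Icc a t)) :
    ContinuousOn (fun s => ∫ u in a..s, φ u) (Icc a t) := by
  rw [← uIcc_of_le hat] at hφ ⊢
  exact continuousOn_primitive_interval (hφ.integrableOn_compact isCompact_uIcc)

theorem continuousOn_pathwiseIntegral (hat : a ≤ t)
    (hg : ∀ u ∈ Icc a t, DifferentiableAt ℝ g u)
    (hφ : ContinuousOn (fun u => deriv g u * w u) (Icc a t)) (hw : ContinuousOn w (Icc a t)) :
    ContinuousOn (pathwiseIntegral g w a) (Icc a t) := by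
  have hgc : ContinuousOn g (Icc a t) := fun u hu => (hg u hu).continuousAt.continuousWithinAt
  exact ((hgc.mul hw).sub continuousOn_const).sub (continuousOn_primitive_Icc hat hφ)

theorem intervalIntegrable_variation_of_constants (hat : a ≤ t) (hf : ContinuousOn f (Icc a t))
    (hg : ∀ u ∈ Icc a t, HasDerivAt g (-(p u * g u)) u)
    (hp : ContinuousOn p (Icc a t)) (hw : ContinuousOn w (Icc a t)) (C ν : ℝ) :
    IntervalIntegrable (fun u => p u * (f u * (C + ν * pathwiseIntegral g w a u))) volume a t :=
  (hp.mul (hf.mul (continuousOn_const.add (continuousOn_const.mul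
    (continuousOn_pathwiseIntegral hat (fun u hu => (hg u hu).differentiableAt)
      (continuousOn_deriv_mul_of_hasDerivAt hg hp hw) hw))))).intervalIntegrable_of_Icc hat

/-- Writing `f (C + ν ∫_a^s g dw) = ν w s + f s K s` with `K' = -ν g' w = ν p g w`, the product
rule gives `(f K)' = p (ν w + f K)`. -/
theorem variation_of_constants_integral_eq (hat : a ≤ t)
    (hf : ∀ u ∈ Icc a t, HasDerivAt f (p u * f u) u)
    (hg : ∀ u ∈ Icc a t, HasDerivAt g (-(p u * g u)) u)
    (hfg : ∀ u ∈ Icc a t, f u * g u = 1)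
    (hp : ContinuousOn p (Icc a t)) (hw : ContinuousOn w (Icc a t)) (C ν : ℝ) :
    f t * (C + ν * pathwiseIntegral g w a t)
      = f a * (C + ν * pathwiseIntegral g w a a)
        + (∫ u in a..t, p u * (f u * (C + ν * pathwiseIntegral g w a u)))
        + ν * (w t - w a) := by
  set H := fun s => ∫ u in a..s, deriv g u * w u
  set K := fun s => C - ν * (g a * w a) - ν * H s
  have hφ := continuousOn_deriv_mul_of_hasDerivAt hg hp hw
  have hfc : ContinuousOn f (Icc a t) := fun u hu => (hf u hu).continuousAt.continuousWithinAt
  have hH : ContinuousOn H (Icc a t) := continuousOn_primitive_Icc hat hφ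
  have hH' : ∀ u ∈ Ioo a t, HasDerivAt H (deriv g u * w u) u := fun u hu =>
    integral_hasDerivAt_right
      ((hφ.mono (Icc_subset_Icc le_rfl hu.2.le)).intervalIntegrable_of_Icc hu.1.le)
      (hφ.stronglyMeasurableAtFilter_nhdsWithin measurableSet_Icc u |>.filter_mono (by
        rw [nhdsWithin_eq_nhds.2 (Icc_mem_nhds hu.1 hu.2)]))
      (hφ.continuousAt (Icc_mem_nhds hu.1 hu.2))
  have hX : ∀ s ∈ Icc a t,
      f s * (C + ν * pathwiseIntegral g w a s) = ν * w s + f s * K s := fun s hs => by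
    simp only [pathwiseIntegral, K, H]
    linear_combination (ν * w s) * hfg s hs
  have hfKc : ContinuousOn (fun s => f s * K s) (Icc a t) :=
    hfc.mul (continuousOn_const.sub (continuousOn_const.mul hH))
  have hfK : ∫ u in a..t, p u * (ν * w u + f u * K u) = f t * K t - f a * K a := by
    refine integral_eq_sub_of_hasDerivAt_of_le hat hfKc (fun u hu => ?_) ?_
    · have hu' := Ioo_subset_Icc_self hu
      refine ((hf u hu').mul (((hH' u hu).const_mul ν).const_sub _)).congr_deriv ?_
      rw [(hg u hu').deriv]
      linear_combination (ν * p u * w u) * hfg u hu'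
    · exact (hp.mul ((continuousOn_const.mul hw).add hfKc)).intervalIntegrable_of_Icc hat
  rw [integral_congr fun u hu => by rw [hX u (uIcc_of_le hat ▸ hu)], hfK,
    hX t (right_mem_Icc.2 hat), hX a (left_mem_Icc.2 hat)]
  ring

end VariationOfConstants

theorem hasDerivAt_sub_div_rpow {c ε u : ℝ} (q : ℝ) (hε : 0 < ε) (hcu : c < u) :
    HasDerivAt (fun v => ((v - c) / ε) ^ q) (q / (u - c) * ((u - c) / ε) ^ q) u := by
  have hx : (u - c) / ε ≠ 0 := (div_pos (sub_pos.2 hcu) hε).ne'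
  have hlin : HasDerivAt (fun v => (v - c) / ε) (1 / ε) u := by
    simpa using ((hasDerivAt_id u).sub_const c).div_const ε
  refine ((hasDerivAt_rpow_const (p := q) (Or.inl hx)).comp u hlin).congr_deriv ?_
  rw [rpow_sub_one hx]
  field_simp [(sub_pos.2 hcu).ne']

theorem explicit_solution_linear_sde_general {Ω : Type*}
    (W : ℝ → Ω → ℝ) (hW : ∀ ω, Continuous fun t => W t ω)
    (j : ℕ) (Δ ε ν σ μ β : ℝ)
    (hε : 0 < ε)
    (g : ℝ → ℝ) (hg : ∀ u, g u = ((u - (j : ℝ) * Δ) / ε) ^ (-(β / 2)))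
    (ι : ℝ → Ω → ℝ)
    (hι : ∀ ω, ∀ t ∈ Set.Ico ((j : ℝ) * Δ + ε) (((j : ℝ) + 1) * Δ),
      ι t ω = g t * W t ω - g ((j : ℝ) * Δ + ε) * W ((j : ℝ) * Δ + ε) ω
        - ∫ u in ((j : ℝ) * Δ + ε)..t, deriv g u * W u ω)
    (Z : ℝ → Ω → ℝ)
    (hZ : ∀ ω, ∀ t ∈ Set.Ico ((j : ℝ) * Δ + ε) (((j : ℝ) + 1) * Δ),
      Z t ω = Z ((j : ℝ) * Δ) ω + (μ - σ ^ 2 / 2) * (t - (j : ℝ) * Δ)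
        + ((t - (j : ℝ) * Δ) / ε) ^ (β / 2) *
            (σ * (W ((j : ℝ) * Δ + ε) ω - W ((j : ℝ) * Δ) ω) + ν * ι t ω)) :
    ∀ ω, ∀ t ∈ Set.Ico ((j : ℝ) * Δ + ε) (((j : ℝ) + 1) * Δ),
      Z t ω = Z ((j : ℝ) * Δ + ε) ω
        + (∫ u in ((j : ℝ) * Δ + ε)..t,
            ((μ - σ ^ 2 / 2)
              + (β / (2 * (u - (j : ℝ) * Δ)))
                * (Z u ω - Z ((j : ℝ) * Δ) ω - (μ - σ ^ 2 / 2) * (u - (j : ℝ) * Δ))))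
        + ν * (W t ω - W ((j : ℝ) * Δ + ε) ω) := by
  intro ω t ht
  set c := (j : ℝ) * Δ
  set a := c + ε
  set m := μ - σ ^ 2 / 2
  set f := fun s => ((s - c) / ε) ^ (β / 2)
  set p := fun u => β / (2 * (u - c))
  set X := fun s => f s * (σ * (W a ω - W c ω) + ν * pathwiseIntegral g (W · ω) a s)
  have hc : ∀ u ∈ Icc a t, c < u := fun u hu => by linarith [hu.1]
  have hf : ∀ u ∈ Icc a t, HasDerivAt f (p u * f u) u := fun u hu =>
    (hasDerivAt_sub_div_rpow _ hε (hc u hu)).congr_deriv (by simp only [p, f]; field_simp)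
  have hg' : ∀ u ∈ Icc a t, HasDerivAt g (-(p u * g u)) u := fun u hu => by
    rw [funext hg]
    exact (hasDerivAt_sub_div_rpow _ hε (hc u hu)).congr_deriv (by simp only [p]; field_simp)
  have hfg : ∀ u ∈ Icc a t, f u * g u = 1 := fun u hu => by
    have hx : 0 < (u - c) / ε := div_pos (sub_pos.2 (hc u hu)) hε
    rw [hg, rpow_neg hx.le, mul_inv_cancel₀ (rpow_pos_of_pos hx _).ne']
  have hp : ContinuousOn p (Icc a t) := continuousOn_const.div (continuousOn_const.mul
    (continuousOn_id.sub continuousOn_const)) fun u hu => by linarith [hc u hu]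
  have hw : ContinuousOn (W · ω) (Icc a t) := (hW ω).continuousOn
  have hZX : ∀ u ∈ Icc a t, Z u ω = Z c ω + m * (u - c) + X u := fun u hu => by
    have hu' : u ∈ Ico a (((j : ℝ) + 1) * Δ) := ⟨hu.1, hu.2.trans_lt ht.2⟩
    rw [hZ ω u hu', hι ω u hu']
    rfl
  have hpX := intervalIntegrable_variation_of_constants ht.1
    (fun u hu => (hf u hu).continuousAt.continuousWithinAt) hg' hp hw (σ * (W a ω - W c ω)) ν
  have hint : ∫ u in a..t, (m + p u * (Z u ω - Z c ω - m * (u - c)))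
      = m * (t - a) + ∫ u in a..t, p u * X u := by
    rw [integral_congr (g := fun u => m + p u * X u) fun u hu => by
        rw [hZX u (uIcc_of_le ht.1 ▸ hu)]; ring,
      integral_add (f := fun _ => m) (g := fun u => p u * X u) intervalIntegrable_const hpX,
      intervalIntegral.integral_const,
      smul_eq_mul, mul_comm]
  have hsde := variation_of_constants_integral_eq ht.1 hf hg' hfg hp hw
    (σ * (W a ω - W c ω)) ν
  rw [hint, hZX t (right_mem_Icc.2 ht.1), hZX a (left_mem_Icc.2 ht.1)]
  linear_combination hsde

/-- On `[jΔ+ε, (j+1)Δ)`, the explicit process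
`Z_t = Z_{jΔ} + (μ - σ̄²/2)(t - jΔ)
       + ((t - jΔ)/ε)^{β/2} [σ̄(W_{jΔ+ε} - W_{jΔ}) + ν ∫_{jΔ+ε}^t ((u - jΔ)/ε)^{-β/2} dW_u]`
is a strong solution of the linear SDE
`dZ_t = [(μ - σ̄²/2) + (β/(2(t - jΔ)))(Z_t - Z_{jΔ} - (μ - σ̄²/2)(t - jΔ))] dt + ν dW_t`,
stated in integrated form. The stochastic integral `ι` of the deterministic `C¹`
integrand `g(u) = ((u - jΔ)/ε)^{-β/2}` is defined pathwise by integration by parts. -/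
theorem explicit_solution_linear_sde {Ω : Type*}
    (W : ℝ → Ω → ℝ) (hW : ∀ ω, Continuous fun t => W t ω)
    (j : ℕ) (Δ ε ν σ μ β : ℝ)
    (hε : 0 < ε) (hεΔ : ε < Δ) (hν : 0 < ν) (hσ : 0 < σ)
    (hβ : β = 1 - ν ^ 2 / σ ^ 2) (hβ1 : β < 1)
    (g : ℝ → ℝ) (hg : ∀ u, g u = ((u - (j : ℝ) * Δ) / ε) ^ (-(β / 2)))
    (ι : ℝ → Ω → ℝ)
    (hι : ∀ ω, ∀ t ∈ Set.Ico ((j : ℝ) * Δ + ε) (((j : ℝ) + 1) * Δ),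
      ι t ω = g t * W t ω - g ((j : ℝ) * Δ + ε) * W ((j : ℝ) * Δ + ε) ω
        - ∫ u in ((j : ℝ) * Δ + ε)..t, deriv g u * W u ω)
    (Z : ℝ → Ω → ℝ)
    (hZ : ∀ ω, ∀ t ∈ Set.Ico ((j : ℝ) * Δ + ε) (((j : ℝ) + 1) * Δ),
      Z t ω = Z ((j : ℝ) * Δ) ω + (μ - σ ^ 2 / 2) * (t - (j : ℝ) * Δ)
        + ((t - (j : ℝ) * Δ) / ε) ^ (β / 2) *
            (σ * (W ((j : ℝ) * Δ + ε) ω - W ((j : ℝ) * Δ) ω) + ν * ι t ω)) :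
    ∀ ω, ∀ t ∈ Set.Ico ((j : ℝ) * Δ + ε) (((j : ℝ) + 1) * Δ),
      Z t ω = Z ((j : ℝ) * Δ + ε) ω
        + (∫ u in ((j : ℝ) * Δ + ε)..t,
            ((μ - σ ^ 2 / 2)
              + (β / (2 * (u - (j : ℝ) * Δ)))
                * (Z u ω - Z ((j : ℝ) * Δ) ω - (μ - σ ^ 2 / 2) * (u - (j : ℝ) * Δ))))
        + ν * (W t ω - W ((j : ℝ) * Δ + ε) ω) :=
  explicit_solution_linear_sde_general W hW j Δ ε ν σ μ β hε g hg ι hι Z hZ
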